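/- Let β > 1 be a real number and let a be the β-expansion of β. Then W(β) is exactly the set of words w such that B̄(w) ≤ β and σ^k w ≠ a for every k ≥ 0. Moreover, for every word w that is not identically zero, B̄(w) = inf{β > 1 : w ∈ W(β)}. -/

import Mathlib

/-- The shift map iterated `k` times: `(shift k w) i = w (i + k)`,
so `shift k w = w_k w_{k+1} w_{k+2} …`. -/
def shift (k : ℕ) (w : ℕ → ℕ) : ℕ → ℕ := fun i => w (i + k)

/-- Strict lexicographic order on infinite words: `v < w` iff there is an index `i`
with `v j = w j` for all `j < i` and `v i < w i`. -/
def LexLt (v w : ℕ → ℕ) : Prop := ∃ i, (∀ j < i, v j = w j) ∧ v i < w i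

/-- Weak lexicographic order: `v ≤ w` iff `v < w` or `v = w`. -/
def LexLe (v w : ℕ → ℕ) : Prop := LexLt v w ∨ v = w

/-- A word is a bounded sequence of natural numbers. -/
def IsWord (w : ℕ → ℕ) : Prop := ∃ M, ∀ i, w i ≤ M

/-- `fword w β = ∑_{i ≥ 0} w_i β^{-(i+1)} = w_0/β + w_1/β² + …`. -/
noncomputable def fword (w : ℕ → ℕ) (β : ℝ) : ℝ := ∑' i : ℕ, (w i : ℝ) / β ^ (i + 1)

open Classical in
/-- `B̂(w)`: zero for the zero word, and otherwise `inf {β > 1 : f_w(β) ≤ 1}`. -/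
noncomputable def Bhat (w : ℕ → ℕ) : ℝ :=
  if w = fun _ => 0 then 0 else sInf {β : ℝ | 1 < β ∧ fword w β ≤ 1}

/-- `B̄(w) = sup_{j ≥ 0} B̂(σ^j w)`. -/
noncomputable def Bbar (w : ℕ → ℕ) : ℝ := ⨆ j : ℕ, Bhat (shift j w)

/-- The sequence `A_i` in the β-expansion of `β`: `A_0 = β`, `A_{i+1} = β (A_i - ⌊A_i⌋)`. -/
noncomputable def betaA (β : ℝ) : ℕ → ℝ
  | 0 => β
  | i + 1 => β * (betaA β i - (⌊betaA β i⌋₊ : ℝ))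

/-- The β-expansion of `β`: the word `a` with `a_i = ⌊A_i⌋`. -/
noncomputable def betaExp (β : ℝ) : ℕ → ℕ := fun i => ⌊betaA β i⌋₊

/-- The domain `W(β)` of the β-shift: all words `w` with `σ^k w < a` lexicographically
for every `k ≥ 0`, where `a` is the β-expansion of `β`. -/
def Wset (β : ℝ) : Set (ℕ → ℕ) :=
  {w | IsWord w ∧ ∀ k : ℕ, LexLt (shift k w) (betaExp β)}

/-- `π` is a permutation of `{1, …, n}` (viewed as a map `ℕ → ℕ`). -/
def IsPerm (n : ℕ) (π : ℕ → ℕ) : Prop := Set.BijOn π (Set.Icc 1 n) (Set.Icc 1 n)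

/-- The word `w` induces the permutation `π` of `{1, …, n}`: for all `1 ≤ i, j ≤ n`,
`π(i) < π(j)` iff `σ^{i-1} w < σ^{j-1} w` lexicographically. -/
def Induces (n : ℕ) (w : ℕ → ℕ) (π : ℕ → ℕ) : Prop :=
  ∀ i ∈ Set.Icc 1 n, ∀ j ∈ Set.Icc 1 n,
    (π i < π j ↔ LexLt (shift (i - 1) w) (shift (j - 1) w))

/-- `π ∈ Al(Σ_β)`: some word in `W(β)` induces `π`. -/
def Allowed (β : ℝ) (n : ℕ) (π : ℕ → ℕ) : Prop := ∃ w ∈ Wset β, Induces n w π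

/-- The shift-complexity `B(π) = inf {β > 1 : π ∈ Al(Σ_β)}`. -/
noncomputable def Bperm (n : ℕ) (π : ℕ → ℕ) : ℝ :=
  sInf {β : ℝ | 1 < β ∧ Allowed β n π}

/-- `ρ_m` is the permutation `1 m 2 (m-1) 3 (m-2) …` of `{1, …, m}`:
`ρ(2i-1) = i` and `ρ(2i) = m+1-i`. -/
def IsRho (m : ℕ) (ρ : ℕ → ℕ) : Prop :=
  IsPerm m ρ ∧ (∀ i, 1 ≤ i → 2 * i - 1 ≤ m → ρ (2 * i - 1) = i) ∧
    (∀ i, 1 ≤ i → 2 * i ≤ m → ρ (2 * i) = m + 1 - i)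

/-!
If a word `v` agrees with the β-expansion `a` of `β` before index `i`, then
`∑_{j<i} a_j β^{-(j+1)} = 1 - A_i β^{-(i+1)}` gives `f_v(β) = 1 + (f_{σ^i v}(β) - A_i/β) / β^i`.
Since `a_i ≤ A_i < a_i + 1`, a word above `a` has `f_v(β) > 1`, while if every shift of `w`
lies below `a`, then `C = sup_k f_{σ^k w}(β)` satisfies `C ≤ 1 + (C - 1)/β`, i.e. `C ≤ 1`.
As `f_w` is decreasing in `β`, `f_w(β) ≤ 1` amounts to `B̂(w) ≤ β`, which yields the description
of `W(β)`. Finally `β ↦ a(β)` is injective (`f_{a(β)}(β) = 1` and `f` is strictly decreasing),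
so only countably many `β` have `a(β)` among the shifts of `w`; every other `β > B̄(w)` has
`w ∈ W(β)`.
-/

open Filter Topology

lemma shift_shift (a b : ℕ) (w : ℕ → ℕ) : shift a (shift b w) = shift (a + b) w := by
  funext i; simp [shift, Nat.add_assoc]

lemma isWord_shift {w : ℕ → ℕ} (hw : IsWord w) (k : ℕ) : IsWord (shift k w) :=
  let ⟨M, hM⟩ := hw; ⟨M, fun _ => hM _⟩

section fword

variable {w : ℕ → ℕ} {β : ℝ}

lemma fword_term_le {M : ℕ} (hM : ∀ i, w i ≤ M) (hβ : 1 < β) (i : ℕ) :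
    (w i : ℝ) / β ^ (i + 1) ≤ M * β⁻¹ * β⁻¹ ^ i := by
  have hβ0 : 0 < β := by linarith
  rw [mul_assoc, ← pow_succ', inv_pow, ← div_eq_mul_inv]
  gcongr
  exact_mod_cast hM i

lemma summable_geometric_inv (hβ : 1 < β) : Summable fun i : ℕ => β⁻¹ ^ i :=
  summable_geometric_of_lt_one (by positivity) (inv_lt_one_of_one_lt₀ hβ)

lemma summable_fword (hw : IsWord w) (hβ : 1 < β) :
    Summable fun i => (w i : ℝ) / β ^ (i + 1) := by
  obtain ⟨M, hM⟩ := hw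
  have hβ0 : 0 < β := by linarith
  exact .of_nonneg_of_le (fun i => by positivity) (fword_term_le hM hβ)
    ((summable_geometric_inv hβ).mul_left _)

lemma fword_nonneg (hβ : 0 ≤ β) : 0 ≤ fword w β :=
  tsum_nonneg fun _ => by positivity

lemma fword_le_div {M : ℕ} (hM : ∀ i, w i ≤ M) (hβ : 1 < β) : fword w β ≤ M / (β - 1) := by
  have hβ1 : β - 1 ≠ 0 := by linarith
  calc fword w β ≤ ∑' i, M * β⁻¹ * β⁻¹ ^ i :=
        Summable.tsum_le_tsum (fword_term_le hM hβ) (summable_fword ⟨M, hM⟩ hβ)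
          ((summable_geometric_inv hβ).mul_left _)
    _ = M / (β - 1) := by
        rw [tsum_mul_left, tsum_geometric_of_lt_one (by positivity) (inv_lt_one_of_one_lt₀ hβ)]
        field_simp

lemma fword_add_two_le_one {M : ℕ} (hM : ∀ i, w i ≤ M) : fword w (M + 2) ≤ 1 := by
  have hM0 : (0 : ℝ) ≤ M := M.cast_nonneg
  refine (fword_le_div hM (by linarith)).trans ?_
  rw [div_le_one (by linarith)]
  linarith

lemma fword_eq_sum_add (hw : IsWord w) (hβ : 1 < β) (N : ℕ) :
    fword w β = ∑ j ∈ Finset.range N, (w j : ℝ) / β ^ (j + 1) + fword (shift N w) β / β ^ N := by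
  rw [fword, ← (summable_fword hw hβ).sum_add_tsum_nat_add N, fword, ← tsum_div_const]
  congr 2
  funext i
  rw [shift, div_div, ← pow_add, add_right_comm]

lemma fword_eq_head_add (hw : IsWord w) (hβ : 1 < β) :
    fword w β = (w 0 + fword (shift 1 w) β) / β := by
  rw [fword_eq_sum_add hw hβ 1, Finset.sum_range_one, zero_add, pow_one, add_div]

lemma fword_antitoneOn (hw : IsWord w) : AntitoneOn (fword w) (Set.Ioi 1) := by
  intro β₁ (h1 : 1 < β₁) β₂ (h2 : 1 < β₂) h12
  have : 0 < β₁ := by linarith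
  exact Summable.tsum_le_tsum (fun i => by gcongr) (summable_fword hw h2) (summable_fword hw h1)

lemma fword_strictAntiOn (hw : IsWord w) (h0 : w ≠ fun _ => 0) :
    StrictAntiOn (fword w) (Set.Ioi 1) := by
  intro β₁ (h1 : 1 < β₁) β₂ (h2 : 1 < β₂) h12
  obtain ⟨i, hi⟩ : ∃ i, w i ≠ 0 := by
    by_contra! h
    exact h0 (funext h)
  have : 0 < β₁ := by linarith
  refine Summable.tsum_lt_tsum (i := i) (fun i => by gcongr) ?_ (summable_fword hw h2)
    (summable_fword hw h1)
  have : (0 : ℝ) < w i := by exact_mod_cast Nat.pos_of_ne_zero hi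
  gcongr

lemma fword_le_of_forall_gt (hw : IsWord w) (hβ : 1 < β) {c : ℝ}
    (h : ∀ β' > β, fword w β' ≤ c) : fword w β ≤ c := by
  refine Real.tsum_le_of_sum_range_le (fun i => by positivity) fun N => ?_
  have hcont : ContinuousAt (fun x : ℝ => ∑ j ∈ Finset.range N, (w j : ℝ) / x ^ (j + 1)) β :=
    tendsto_finsetSum _ fun j _ =>
      continuousAt_const.div (continuousAt_pow _ _) (by positivity)
  refine le_of_tendsto (hcont.tendsto.mono_left (nhdsWithin_le_nhds (s := Set.Ioi β))) ?_
  filter_upwards [self_mem_nhdsWithin] with x (hx : β < x)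
  have : 0 < x := by linarith
  exact ((summable_fword hw (hβ.trans hx)).sum_le_tsum _ fun i _ => by positivity).trans (h x hx)

end fword

section betaExp

variable {β : ℝ}

lemma betaA_nonneg (hβ : 1 < β) (i : ℕ) : 0 ≤ betaA β i := by
  induction i with
  | zero => exact zero_le_one.trans hβ.le
  | succ n ih =>
    have := Nat.floor_le ih
    exact mul_nonneg (by linarith) (by linarith)

lemma betaA_le (hβ : 1 < β) (i : ℕ) : betaA β i ≤ β := by
  cases i with
  | zero => exact le_rfl
  | succ n =>
    have h1 := betaA_nonneg hβ n
    have h2 := Nat.lt_floor_add_one (betaA β n)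
    show β * (betaA β n - ⌊betaA β n⌋₊) ≤ β
    nlinarith

lemma betaExp_le_betaA (hβ : 1 < β) (i : ℕ) : (betaExp β i : ℝ) ≤ betaA β i :=
  Nat.floor_le (betaA_nonneg hβ i)

lemma betaA_lt_betaExp_add_one (i : ℕ) : betaA β i < betaExp β i + 1 :=
  Nat.lt_floor_add_one _

lemma isWord_betaExp (hβ : 1 < β) : IsWord (betaExp β) :=
  ⟨⌊β⌋₊, fun i => Nat.floor_le_floor (betaA_le hβ i)⟩

lemma betaExp_ne_zero (hβ : 1 < β) : betaExp β ≠ fun _ => 0 := by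
  intro h
  have : 1 ≤ betaExp β 0 := Nat.le_floor (by exact_mod_cast hβ.le)
  simp [h] at this

lemma sum_range_betaExp (hβ : 1 < β) (N : ℕ) :
    ∑ j ∈ Finset.range N, (betaExp β j : ℝ) / β ^ (j + 1) = 1 - betaA β N / β ^ (N + 1) := by
  have hβ0 : β ≠ 0 := by positivity
  induction N with
  | zero => simp [betaA, hβ0]
  | succ n ih =>
    rw [Finset.sum_range_succ, ih]
    show _ = 1 - β * (betaA β n - ⌊betaA β n⌋₊) / β ^ (n + 1 + 1)
    rw [betaExp]
    field_simp
    ring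

lemma fword_betaExp (hβ : 1 < β) : fword (betaExp β) β = 1 := by
  have hβ0 : 0 < β := by linarith
  have hrem : Tendsto (fun N : ℕ => betaA β N / β ^ (N + 1)) atTop (𝓝 0) := by
    refine squeeze_zero (fun N => by have := betaA_nonneg hβ N; positivity) (fun N => ?_)
      (tendsto_pow_atTop_nhds_zero_of_lt_one (by positivity) (inv_lt_one_of_one_lt₀ hβ))
    rw [pow_succ', ← div_div, inv_pow, ← one_div]
    gcongr
    exact (div_le_one hβ0).2 (betaA_le hβ N)
  refine tendsto_nhds_unique (summable_fword (isWord_betaExp hβ) hβ).hasSum.tendsto_sum_nat ?_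
  simpa only [sum_range_betaExp hβ, sub_zero] using hrem.const_sub 1

lemma betaExp_injOn : Set.InjOn betaExp (Set.Ioi 1) := by
  intro β₁ (h1 : 1 < β₁) β₂ (h2 : 1 < β₂) he
  refine (fword_strictAntiOn (isWord_betaExp h1) (betaExp_ne_zero h1)).injOn h1 h2 ?_
  rw [fword_betaExp h1, he, fword_betaExp h2]

lemma fword_eq_of_forall_lt_eq_betaExp {v : ℕ → ℕ} (hv : IsWord v) (hβ : 1 < β) {i : ℕ}
    (h : ∀ j < i, v j = betaExp β j) :
    fword v β = 1 + (fword (shift i v) β - betaA β i / β) / β ^ i := by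
  have hβ0 : β ≠ 0 := by positivity
  rw [fword_eq_sum_add hv hβ i,
    Finset.sum_congr rfl fun j hj => by rw [h j (Finset.mem_range.1 hj)], sum_range_betaExp hβ]
  field_simp
  ring

lemma one_lt_fword_of_betaExp_lexLt {v : ℕ → ℕ} (hv : IsWord v) (hβ : 1 < β)
    (h : LexLt (betaExp β) v) : 1 < fword v β := by
  obtain ⟨i, hpre, hlt⟩ := h
  have hβ0 : 0 < β := by linarith
  have hdigit : betaA β i < v i := by
    have : (betaExp β i : ℝ) + 1 ≤ v i := by exact_mod_cast hlt
    linarith [betaA_lt_betaExp_add_one (β := β) i]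
  have htail : betaA β i / β < fword (shift i v) β := by
    rw [fword_eq_head_add (isWord_shift hv i) hβ]
    have := fword_nonneg (w := shift 1 (shift i v)) hβ0.le
    simp only [shift, zero_add] at this ⊢
    gcongr
    exact hdigit.trans_le (le_add_of_nonneg_right this)
  rw [fword_eq_of_forall_lt_eq_betaExp hv hβ fun j hj => (hpre j hj).symm]
  have : 0 < (fword (shift i v) β - betaA β i / β) / β ^ i := div_pos (by linarith) (by positivity)
  linarith

lemma fword_le_of_lexLt_betaExp {v : ℕ → ℕ} (hv : IsWord v) (hβ : 1 < β)
    (h : LexLt v (betaExp β)) :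
    ∃ i, fword v β ≤ 1 + (fword (shift (i + 1) v) β - 1) / β ^ (i + 1) := by
  obtain ⟨i, hpre, hlt⟩ := h
  have hβ0 : 0 < β := by linarith
  have hdigit : (v i : ℝ) ≤ betaA β i - 1 := by
    have : (v i : ℝ) + 1 ≤ betaExp β i := by exact_mod_cast hlt
    linarith [betaExp_le_betaA hβ i]
  refine ⟨i, ?_⟩
  rw [fword_eq_of_forall_lt_eq_betaExp hv hβ hpre, fword_eq_head_add (isWord_shift hv i) hβ,
    shift_shift, add_comm 1 i, pow_succ', ← div_div, ← sub_div]
  gcongr 1 + ?_ / _ / _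
  simp only [shift, zero_add]
  linarith

lemma fword_shift_le_one_of_forall_lexLt (hβ : 1 < β) {w : ℕ → ℕ} (hw : IsWord w)
    (h : ∀ k, LexLt (shift k w) (betaExp β)) (k : ℕ) : fword (shift k w) β ≤ 1 := by
  obtain ⟨M, hM⟩ := hw
  have hbdd : BddAbove (Set.range fun k => fword (shift k w) β) :=
    ⟨M / (β - 1), by rintro _ ⟨k, rfl⟩; exact fword_le_div (fun i => hM _) hβ⟩
  set C := ⨆ k, fword (shift k w) β
  suffices C ≤ 1 from (le_ciSup hbdd k).trans this
  by_contra! hC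
  have hstep : ∀ k, fword (shift k w) β ≤ 1 + (C - 1) / β := by
    intro k
    obtain ⟨i, hi⟩ := fword_le_of_lexLt_betaExp (isWord_shift ⟨M, hM⟩ k) hβ (h k)
    refine hi.trans ?_
    rw [shift_shift]
    have : fword (shift (i + 1 + k) w) β ≤ C := le_ciSup hbdd _
    calc 1 + (fword (shift (i + 1 + k) w) β - 1) / β ^ (i + 1) ≤ 1 + (C - 1) / β ^ (i + 1) := by
          gcongr
      _ ≤ 1 + (C - 1) / β ^ 1 := by gcongr <;> linarith
      _ = 1 + (C - 1) / β := by rw [pow_one]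
  have := ciSup_le hstep
  have : (C - 1) / β < C - 1 := div_lt_self (by linarith) hβ
  linarith

end betaExp

section Bhat

variable {w : ℕ → ℕ}

lemma nonempty_fword_le_one (hw : IsWord w) : {β : ℝ | 1 < β ∧ fword w β ≤ 1}.Nonempty :=
  let ⟨M, hM⟩ := hw
  ⟨M + 2, by linarith [M.cast_nonneg (α := ℝ)], fword_add_two_le_one hM⟩

lemma Bhat_le_of_fword_le_one {γ : ℝ} (hγ : 1 < γ) (h : fword w γ ≤ 1) : Bhat w ≤ γ := by
  rw [Bhat]
  split_ifs
  · linarith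
  · exact csInf_le ⟨1, fun x hx => hx.1.le⟩ ⟨hγ, h⟩

lemma Bhat_le_add_two {M : ℕ} (hM : ∀ i, w i ≤ M) : Bhat w ≤ M + 2 :=
  Bhat_le_of_fword_le_one (by linarith [M.cast_nonneg (α := ℝ)]) (fword_add_two_le_one hM)

lemma one_le_Bhat (hw : IsWord w) (h0 : w ≠ fun _ => 0) : 1 ≤ Bhat w := by
  rw [Bhat, if_neg h0]
  exact le_csInf (nonempty_fword_le_one hw) fun x hx => hx.1.le

lemma Bhat_le_iff (hw : IsWord w) {β : ℝ} (hβ : 1 < β) : Bhat w ≤ β ↔ fword w β ≤ 1 := by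
  refine ⟨fun h => ?_, Bhat_le_of_fword_le_one hβ⟩
  by_cases h0 : w = fun _ => 0
  · simp [h0, fword]
  refine fword_le_of_forall_gt hw hβ fun β' hβ' => ?_
  rw [Bhat, if_neg h0] at h
  obtain ⟨γ, ⟨hγ, hfγ⟩, hγβ'⟩ := exists_lt_of_csInf_lt (nonempty_fword_le_one hw) (h.trans_lt hβ')
  exact (fword_antitoneOn hw hγ (hγ.trans hγβ') hγβ'.le).trans hfγ

lemma bddAbove_range_Bhat_shift (hw : IsWord w) :
    BddAbove (Set.range fun j => Bhat (shift j w)) :=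
  let ⟨M, hM⟩ := hw
  ⟨M + 2, by rintro _ ⟨j, rfl⟩; exact Bhat_le_add_two fun i => hM _⟩

lemma Bbar_le_iff (hw : IsWord w) {β : ℝ} (hβ : 1 < β) :
    Bbar w ≤ β ↔ ∀ k, fword (shift k w) β ≤ 1 := by
  rw [Bbar, ciSup_le_iff (bddAbove_range_Bhat_shift hw)]
  exact forall_congr' fun k => Bhat_le_iff (isWord_shift hw k) hβ

lemma one_le_Bbar (hw : IsWord w) (h0 : w ≠ fun _ => 0) : 1 ≤ Bbar w :=
  (one_le_Bhat hw h0).trans (le_ciSup (bddAbove_range_Bhat_shift hw) 0)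

end Bhat

lemma Wset_eq {β : ℝ} (hβ : 1 < β) :
    Wset β = {w | IsWord w ∧ Bbar w ≤ β ∧ ∀ k : ℕ, shift k w ≠ betaExp β} := by
  ext w
  -- `LexLt v w` is definitionally `toLex v < toLex w` in the linear order `Lex (ℕ → ℕ)`.
  refine ⟨fun ⟨hw, hlt⟩ => ⟨hw, ?_, ?_⟩, fun ⟨hw, hB, hne⟩ => ⟨hw, fun k => ?_⟩⟩
  · exact (Bbar_le_iff hw hβ).2 (fword_shift_le_one_of_forall_lexLt hβ hw hlt)
  · intro k hk
    exact lt_irrefl (toLex (betaExp β)) (hk ▸ hlt k)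
  · have hf := (Bbar_le_iff hw hβ).1 hB k
    rcases lt_trichotomy (toLex (shift k w)) (toLex (betaExp β)) with h | h | h
    · exact h
    · exact absurd h (hne k)
    · exact absurd hf (not_le.2 (one_lt_fword_of_betaExp_lexLt (isWord_shift hw k) hβ h))

lemma Bbar_eq_sInf {w : ℕ → ℕ} (hw : IsWord w) (h0 : w ≠ fun _ => 0) :
    Bbar w = sInf {β' : ℝ | 1 < β' ∧ w ∈ Wset β'} := by
  have hb := one_le_Bbar hw h0
  have hcount : (⋃ k, {β' : ℝ | 1 < β' ∧ betaExp β' = shift k w}).Countable :=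
    Set.countable_iUnion fun k => Set.Subsingleton.countable fun x hx y hy =>
      betaExp_injOn hx.1 hy.1 (hx.2.trans hy.2.symm)
  have hexists : ∀ c, Bbar w < c → ∃ β' ∈ {β' : ℝ | 1 < β' ∧ w ∈ Wset β'}, β' < c := by
    intro c hc
    obtain ⟨β', hgood, hβ'⟩ := (hcount.dense_compl ℝ).exists_between hc
    have h1 : 1 < β' := hb.trans_lt hβ'.1
    refine ⟨β', ⟨h1, ?_⟩, hβ'.2⟩
    rw [Wset_eq h1]
    exact ⟨hw, hβ'.1.le, fun k hk => hgood (Set.mem_iUnion.2 ⟨k, h1, hk.symm⟩)⟩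
  refine (csInf_eq_of_forall_ge_of_forall_gt_exists_lt ?_ ?_ hexists).symm
  · obtain ⟨β', h, -⟩ := hexists _ (lt_add_one _)
    exact ⟨β', h⟩
  · rintro β' ⟨h1, hW⟩
    rw [Wset_eq h1] at hW
    exact hW.2.1

/-- Let `β > 1` and let `a` be the β-expansion of `β`. Then `W(β)` is exactly
the set of words `w` with `B̄(w) ≤ β` and `σ^k w ≠ a` for all `k ≥ 0`. Moreover, for every
word `w` that is not identically zero, `B̄(w) = inf {β > 1 : w ∈ W(β)}`. -/
theorem stmt_12 (β : ℝ) (hβ : 1 < β) :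
    Wset β = {w | IsWord w ∧ Bbar w ≤ β ∧ ∀ k : ℕ, shift k w ≠ betaExp β} ∧
      (∀ w : ℕ → ℕ, IsWord w → w ≠ (fun _ => 0) →
        Bbar w = sInf {β' : ℝ | 1 < β' ∧ w ∈ Wset β'}) :=
  ⟨Wset_eq hβ, fun _ hw h0 => Bbar_eq_sInf hw h0⟩
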